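/- arXiv:2507.23008 — 7 statements merged into one kernel-verified Lean document; each statement's English description precedes it below -/
import Mathlib

section
/- Let n, b be positive integers, let g : 𝔽₂^[b] → 𝔽₂ be a gadget, let δ ≥ 0 satisfy |ĝ(S)| ≤ δ for all S ⊆ [b], and set E = (1+2δ)^n − 1. Let A ⊆ 𝔂₂^{[n]×[b]} be a nonempty safe affine subspace of codimension m and let z ∈ 𝔽₂^[n]. Then the number of points x ∈ 𝔽₂^{[n]×[b]} with x ∈ A and G(x) = z satisfies |#(A ∩ G⁻¹(z)) − 2^{nb−n−m}| ≤ E · 2^{nb−n−m} (as real numbers). -/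
open Finset

noncomputable section

abbrev F2 : Type := ZMod 2

/-- Restriction of `x` to block `i`. -/
def blk {ι : Type*} {b : ℕ} (x : (ι × Fin b) → F2) (i : ι) : Fin b → F2 := fun j => x (i, j)

/-- The lifted gadget map `G(x)_i = g(x(i))`. -/
def liftG {n b : ℕ} (g : (Fin b → F2) → F2) (x : (Fin n × Fin b) → F2) : Fin n → F2 :=
  fun i => g (blk x i)

/-- Fourier coefficient of `h : 𝔽₂^J → 𝔽₂` at `T ⊆ J`. -/
def hatFC {J : Type*} [Fintype J] [DecidableEq J] (h : (J → F2) → F2) (T : Finset J) : ℝ :=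
  ((2 : ℝ) ^ (Fintype.card J))⁻¹ *
    ∑ x : J → F2, (-1 : ℝ) ^ ((h x).val + ∑ j ∈ T, (x j).val)

/-- A set of vectors of the lifted space (blocks indexed by `ι`) is safe if any `k`
linearly independent vectors in its span have supports meeting at least `k` blocks. -/
def IsSafeSet {ι : Type*} {b : ℕ} (Vs : Set ((ι × Fin b) → F2)) : Prop :=
  ∀ (k : ℕ) (w : Fin k → ((ι × Fin b) → F2)),
    (∀ m, w m ∈ Submodule.span F2 Vs) → LinearIndependent F2 w →
    k ≤ ({i : ι | ∃ m j, w m (i, j) ≠ 0} : Set ι).ncard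

/-- The annihilator `L(A)` of an affine subspace: all linear forms vanishing on its
direction. -/
def annih {ι : Type*} [Fintype ι] {b : ℕ}
    (A : AffineSubspace F2 ((ι × Fin b) → F2)) : Set ((ι × Fin b) → F2) :=
  {l | ∀ w ∈ A.direction, ∑ p : ι × Fin b, l p * w p = 0}

/-- A (nonempty) affine subspace is safe if its annihilator is safe. -/
def IsSafeAffine {ι : Type*} [Fintype ι] {b : ℕ}
    (A : AffineSubspace F2 ((ι × Fin b) → F2)) : Prop :=
  IsSafeSet (annih A)

/-- Codimension of an affine subspace of the lifted space. -/
def codim {ι : Type*} [Fintype ι] {b : ℕ}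
    (A : AffineSubspace F2 ((ι × Fin b) → F2)) : ℕ :=
  Fintype.card ι * b - Module.finrank F2 A.direction

/-- Standard basis vector at coordinate `p`. -/
def stdv {ι : Type*} [DecidableEq ι] {b : ℕ} (p : ι × Fin b) : (ι × Fin b) → F2 :=
  fun q => if q = p then 1 else 0

/-- A set of blocks `S` is acceptable for a subspace `W` if one can pick one coordinate
in each block of `S` so that no nonzero 𝔽₂-linear combination of the corresponding
standard basis vectors lies in `W`. -/
def AcceptableFor {ι : Type*} [DecidableEq ι] {b : ℕ}
    (W : Submodule F2 ((ι × Fin b) → F2)) (S : Finset ι) : Prop :=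
  ∃ c : ι → Fin b, ∀ T ⊆ S, T.Nonempty → (∑ s ∈ T, stdv (s, c s)) ∉ W

/-- `âcl(A)`: the maximum size of a set of blocks acceptable for the direction of `A`. -/
def acl {ι : Type*} [Fintype ι] [DecidableEq ι] {b : ℕ}
    (A : AffineSubspace F2 ((ι × Fin b) → F2)) : ℕ :=
  sSup {k | ∃ S : Finset ι, S.card = k ∧ AcceptableFor A.direction S}

/-- `v[∖T]`: restriction of `v` to the coordinates of blocks outside `T`. -/
def restrictOut {n b : ℕ} (T : Finset (Fin n)) (v : (Fin n × Fin b) → F2) :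
    ({i : Fin n // i ∉ T} × Fin b) → F2 :=
  fun p => v (p.1.1, p.2)

/-- `T` is a deviolator for `A` if `{ℓ[∖T] : ℓ ∈ L(A)}` is safe. -/
def IsDeviolator {n b : ℕ} (A : AffineSubspace F2 ((Fin n × Fin b) → F2))
    (T : Finset (Fin n)) : Prop :=
  IsSafeSet (restrictOut T '' annih A)

/-- A closure of `A` is a deviolator of minimum cardinality. -/
def IsClosure {n b : ℕ} (A : AffineSubspace F2 ((Fin n × Fin b) → F2))
    (T : Finset (Fin n)) : Prop :=
  IsDeviolator A T ∧ ∀ T', IsDeviolator A T' → T.card ≤ T'.card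

/-- `C_y`: the set of points agreeing with `y` on all coordinates of blocks in `T`. -/
def cube {n b : ℕ} (T : Finset (Fin n)) (y : ({i : Fin n // i ∈ T} × Fin b) → F2) :
    Set ((Fin n × Fin b) → F2) :=
  {x | ∀ (i : Fin n) (hi : i ∈ T) (j : Fin b), x (i, j) = y (⟨i, hi⟩, j)}

/-- The point of the lifted space equal to `y` on the blocks of `T` and to `x` elsewhere. -/
def glue {n b : ℕ} (T : Finset (Fin n)) (y : ({i : Fin n // i ∈ T} × Fin b) → F2)
    (x : ({i : Fin n // i ∉ T} × Fin b) → F2) : (Fin n × Fin b) → F2 :=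
  fun p => if h : p.1 ∈ T then y (⟨p.1, h⟩, p.2) else x (⟨p.1, h⟩, p.2)

/-! Expanding the indicator of `G(x) = z` in the characters of `𝔽₂ⁿ` gives
`2ⁿ · 1[G(x) = z] = ∑_α (-1)^{z(α)} ∏_{i ∈ α} (-1)^{g(x(i))}`; over `A` the term `α = ∅`
sums to `|A|`. For `α ≠ ∅`, Fourier-expanding each factor writes the product as
`∑_F (∏_i ĝ(F i)) χ_ℓ(x)` with `ℓ` supported on the blocks of `α`. Summed over `A`, the
character `χ_ℓ` cancels unless `ℓ ∈ L(A)`, and safety of `L(A)` leaves at most `2^|α|` such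
`ℓ` (a basis of the part of `L(A)` supported on `α` consists of independent vectors meeting
only the `|α|` blocks of `α`). So the `α`-term is at most `|A| (2δ)^|α|`, and summing over
`α ≠ ∅` gives `((1 + 2δ)ⁿ - 1) |A|`. -/

lemma F2_eq_zero_or_eq_one (a : F2) : a = 0 ∨ a = 1 := by revert a; decide

def sgn : AddChar F2 ℝ where
  toFun a := (-1) ^ a.val
  map_zero_eq_one' := rfl
  map_add_eq_mul' a c := by
    rcases F2_eq_zero_or_eq_one a with rfl | rfl <;>
      rcases F2_eq_zero_or_eq_one c with rfl | rfl <;>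
      simp [CharTwo.add_self_eq_zero, ZMod.val_one]

@[simp] lemma sgn_zero : sgn 0 = 1 := rfl

@[simp] lemma sgn_one : sgn 1 = -1 := pow_one _

lemma abs_sgn (a : F2) : |sgn a| = 1 := by rcases F2_eq_zero_or_eq_one a with rfl | rfl <;> simp

lemma one_add_sgn_mul_sgn (a c : F2) : 1 + sgn a * sgn c = if a = c then 2 else 0 := by
  rcases F2_eq_zero_or_eq_one a with rfl | rfl <;> rcases F2_eq_zero_or_eq_one c with rfl | rfl <;>
    norm_num

lemma sgn_sum {κ : Type*} (s : Finset κ) (f : κ → F2) :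
    sgn (∑ i ∈ s, f i) = ∏ i ∈ s, sgn (f i) := by
  classical
  induction s using Finset.induction with
  | empty => simp
  | insert i s hi ih => rw [sum_insert hi, prod_insert hi, sgn.map_add_eq_mul, ih]

lemma sum_sgn_mul_sgn_subsets {J : Type*} [Fintype J] (u v : J → F2) :
    ∑ T : Finset J, sgn (∑ j ∈ T, u j) * sgn (∑ j ∈ T, v j) =
      if u = v then 2 ^ Fintype.card J else 0 := by
  simp_rw [sgn_sum, ← prod_mul_distrib, ← powerset_univ, ← prod_one_add, one_add_sgn_mul_sgn,
    prod_ite_zero, prod_const, card_univ, funext_iff, mem_univ, true_imp_iff]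

lemma hatFC_eq_sum_sgn {J : Type*} [Fintype J] [DecidableEq J] (h : (J → F2) → F2)
    (T : Finset J) :
    hatFC h T = (2 ^ Fintype.card J)⁻¹ * ∑ x : J → F2, sgn (h x) * sgn (∑ j ∈ T, x j) := by
  simp_rw [hatFC, pow_add, sgn_sum, ← prod_pow_eq_pow_sum]
  rfl

lemma sgn_eq_sum_hatFC {J : Type*} [Fintype J] [DecidableEq J] (h : (J → F2) → F2)
    (y : J → F2) : sgn (h y) = ∑ T : Finset J, hatFC h T * sgn (∑ j ∈ T, y j) := by
  simp_rw [hatFC_eq_sum_sgn, mul_assoc, ← mul_sum, sum_mul, mul_assoc]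
  rw [sum_comm]
  simp_rw [← mul_sum, sum_sgn_mul_sgn_subsets, mul_ite, mul_zero, sum_ite_eq', mem_univ, if_true]
  field_simp

section Blocks

variable {ι : Type*} [DecidableEq ι] {b : ℕ}

def blockVec (α : Finset ι) (F : α → Finset (Fin b)) : (ι × Fin b) → F2 :=
  fun p => if h : p.1 ∈ α then if p.2 ∈ F ⟨p.1, h⟩ then 1 else 0 else 0

lemma blockVec_injective (α : Finset ι) : Function.Injective (blockVec (b := b) α) := by
  intro F F' hF
  ext i j
  have := congrFun hF (i, j)
  simp only [blockVec, i.2, dif_pos] at this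
  split_ifs at this <;> simp_all

def blockSupported (α : Finset ι) : Submodule F2 ((ι × Fin b) → F2) :=
  Submodule.pi {p | p.1 ∉ α} fun _ => ⊥

lemma blockVec_mem_blockSupported (α : Finset ι) (F : α → Finset (Fin b)) :
    blockVec α F ∈ blockSupported α := by
  simp +contextual [blockSupported, Submodule.mem_pi, blockVec]

variable [Fintype ι]

lemma blockVec_dotProduct (α : Finset ι) (F : α → Finset (Fin b)) (x : (ι × Fin b) → F2) :
    blockVec α F ⬝ᵥ x = ∑ i : α, ∑ j ∈ F i, x (i, j) := by
  rw [dotProduct, Fintype.sum_prod_type, ← sum_subset (subset_univ α), ← sum_coe_sort]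
  · simp [blockVec]
  · intro i _ hi
    simp [blockVec, hi]

lemma prod_sgn_blk_eq_sum (g : (Fin b → F2) → F2) (α : Finset ι) (x : (ι × Fin b) → F2) :
    ∏ i ∈ α, sgn (g (blk x i)) =
      ∑ F : α → Finset (Fin b), (∏ i, hatFC g (F i)) * sgn (blockVec α F ⬝ᵥ x) := by
  simp_rw [← prod_coe_sort α, sgn_eq_sum_hatFC g, prod_univ_sum, Fintype.piFinset_univ,
    prod_mul_distrib, blockVec_dotProduct, sgn_sum]
  rfl

lemma IsSafeSet.finrank_span_inf_blockSupported_le {V : Set ((ι × Fin b) → F2)}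
    (hV : IsSafeSet V) (α : Finset ι) :
    Module.finrank F2 (Submodule.span F2 V ⊓ blockSupported α : Submodule F2 _) ≤ #α := by
  set U := Submodule.span F2 V ⊓ blockSupported α
  let e := Module.finBasis F2 U
  have hblocks : {i | ∃ m j, (e m : (ι × Fin b) → F2) (i, j) ≠ 0} ⊆ (α : Set ι) := by
    rintro i ⟨m, j, hm⟩
    by_contra hi
    exact hm ((Submodule.mem_pi.1 (Submodule.mem_inf.1 (e m).2).2) (i, j) hi)
  calc Module.finrank F2 U
      ≤ {i | ∃ m j, (e m : (ι × Fin b) → F2) (i, j) ≠ 0}.ncard :=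
        hV _ _ (fun m => (Submodule.mem_inf.1 (e m).2).1)
          (e.linearIndependent.map' U.subtype (Submodule.ker_subtype U))
    _ ≤ #α := by simpa using Set.ncard_le_ncard hblocks α.finite_toSet

lemma IsSafeSet.natCard_span_inf_blockSupported_le {V : Set ((ι × Fin b) → F2)}
    (hV : IsSafeSet V) (α : Finset ι) :
    Nat.card (Submodule.span F2 V ⊓ blockSupported α : Submodule F2 _) ≤ 2 ^ #α := by
  rw [Module.natCard_eq_pow_finrank (K := F2), Nat.card_zmod]
  exact Nat.pow_le_pow_right two_pos (hV.finrank_span_inf_blockSupported_le α)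

lemma IsSafeAffine.card_blockVec_mem_annih_le {A : AffineSubspace F2 ((ι × Fin b) → F2)}
    (hA : IsSafeAffine A) (α : Finset ι) [DecidablePred fun F => blockVec α F ∈ annih A] :
    #{F : α → Finset (Fin b) | blockVec α F ∈ annih A} ≤ 2 ^ #α := by
  let U := Submodule.span F2 (annih A) ⊓ blockSupported α
  let toU (F : {F // blockVec α F ∈ annih A}) : U :=
    ⟨blockVec α F, Submodule.subset_span F.2, blockVec_mem_blockSupported α F.1⟩
  have htoU : Function.Injective toU := fun F F' h =>
    Subtype.ext (blockVec_injective α (congrArg Subtype.val h))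
  rw [← Fintype.card_subtype, ← Nat.card_eq_fintype_card]
  exact (Nat.card_le_card_of_injective toU htoU).trans (hA.natCard_span_inf_blockSupported_le α)

section AffineSum

variable (A : AffineSubspace F2 ((ι × Fin b) → F2)) [DecidablePred (· ∈ A)]

lemma sum_sgn_dotProduct_eq_zero {ℓ : (ι × Fin b) → F2} (hℓ : ℓ ∉ annih A) :
    ∑ x with x ∈ A, sgn (ℓ ⬝ᵥ x) = 0 := by
  obtain ⟨w, hw, hℓw⟩ : ∃ w ∈ A.direction, ℓ ⬝ᵥ w ≠ 0 := by
    simpa [annih, dotProduct] using hℓ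
  have hℓw : ℓ ⬝ᵥ w = 1 := (F2_eq_zero_or_eq_one _).resolve_left hℓw
  refine sum_involution (fun x _ => x + w) (fun x _ => ?_) (fun x _ _ => ?_) (fun x hx => ?_)
    (fun x _ => by ext; simp [add_assoc, CharTwo.add_self_eq_zero])
  · rw [dotProduct_add, sgn.map_add_eq_mul, hℓw, sgn_one]
    ring
  · intro h
    simp [add_eq_left.1 h] at hℓw
  · simp only [mem_filter, mem_univ, true_and] at hx ⊢
    simpa [add_comm] using AffineSubspace.vadd_mem_of_mem_direction hw hx

lemma abs_sum_sgn_dotProduct_le (ℓ : (ι × Fin b) → F2) [Decidable (ℓ ∈ annih A)] :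
    |∑ x with x ∈ A, sgn (ℓ ⬝ᵥ x)| ≤ if ℓ ∈ annih A then (#{x | x ∈ A} : ℝ) else 0 := by
  split_ifs with hℓ
  · calc |∑ x with x ∈ A, sgn (ℓ ⬝ᵥ x)| ≤ ∑ x with x ∈ A, |sgn (ℓ ⬝ᵥ x)| :=
          abs_sum_le_sum_abs _ _
      _ = #{x | x ∈ A} := by simp [abs_sgn]
  · rw [sum_sgn_dotProduct_eq_zero A hℓ, abs_zero]

lemma abs_sum_prod_sgn_blk_le (hA : IsSafeAffine A) (g : (Fin b → F2) → F2) {δ : ℝ}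
    (hδ0 : 0 ≤ δ) (hδ : ∀ S, |hatFC g S| ≤ δ) (α : Finset ι) :
    |∑ x with x ∈ A, ∏ i ∈ α, sgn (g (blk x i))| ≤ #{x | x ∈ A} * (2 * δ) ^ #α := by
  classical
  have hcoeff (F : α → Finset (Fin b)) : |∏ i, hatFC g (F i)| ≤ δ ^ #α := by
    calc |∏ i, hatFC g (F i)| ≤ ∏ _i : α, δ := by
          rw [abs_prod]
          exact prod_le_prod (fun _ _ => abs_nonneg _) fun i _ => hδ (F i)
      _ = δ ^ #α := by rw [prod_const, card_univ, Fintype.card_coe]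
  simp_rw [prod_sgn_blk_eq_sum]
  rw [sum_comm]
  simp_rw [← mul_sum]
  calc _ ≤ ∑ F : α → Finset (Fin b),
          |∏ i, hatFC g (F i)| * |∑ x with x ∈ A, sgn (blockVec α F ⬝ᵥ x)| :=
        (abs_sum_le_sum_abs _ _).trans_eq (sum_congr rfl fun _ _ => abs_mul _ _)
    _ ≤ ∑ F : α → Finset (Fin b),
          δ ^ #α * if blockVec α F ∈ annih A then (#{x | x ∈ A} : ℝ) else 0 := by
        gcongr with F
        exacts [hcoeff F, abs_sum_sgn_dotProduct_le A _]
    _ = δ ^ #α * (#{F : α → Finset (Fin b) | blockVec α F ∈ annih A} * #{x | x ∈ A}) := by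
        rw [← mul_sum, sum_ite, sum_const_zero, add_zero, sum_const, nsmul_eq_mul]
    _ ≤ δ ^ #α * (2 ^ #α * #{x | x ∈ A}) := by
        gcongr
        exact_mod_cast hA.card_blockVec_mem_annih_le α
    _ = #{x | x ∈ A} * (2 * δ) ^ #α := by ring

end AffineSum

lemma card_mul_two_pow_codim {A : AffineSubspace F2 ((ι × Fin b) → F2)}
    [DecidablePred (· ∈ A)] (hA : (A : Set ((ι × Fin b) → F2)).Nonempty) :
    #{x | x ∈ A} * 2 ^ codim A = 2 ^ (Fintype.card ι * b) := by
  have : Nonempty A := hA.to_subtype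
  have hcard : #{x | x ∈ A} = 2 ^ Module.finrank F2 A.direction := by
    rw [← Fintype.card_subtype, ← Nat.card_eq_fintype_card,
      Nat.card_congr (Equiv.vaddConst (Classical.arbitrary A)).symm,
      Module.natCard_eq_pow_finrank (K := F2), Nat.card_zmod]
  have hle : Module.finrank F2 A.direction ≤ Fintype.card ι * b := by
    have h := A.direction.finrank_le
    rwa [Module.finrank_pi, Fintype.card_prod, Fintype.card_fin] at h
  rw [hcard, codim, ← pow_add, Nat.add_sub_cancel' hle]

end Blocks

section Count

variable {n b : ℕ} (g : (Fin b → F2) → F2) (A : AffineSubspace F2 ((Fin n × Fin b) → F2))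
  [DecidablePred (· ∈ A)]

lemma two_pow_mul_card_fiber (z : Fin n → F2) :
    (2 ^ n * #{x | x ∈ A ∧ liftG g x = z} : ℝ) =
      ∑ α : Finset (Fin n), sgn (∑ i ∈ α, z i) * ∑ x with x ∈ A, ∏ i ∈ α, sgn (g (blk x i)) := by
  have hind (x : (Fin n × Fin b) → F2) : (2 ^ n * if liftG g x = z then 1 else 0 : ℝ) =
      ∑ α : Finset (Fin n), sgn (∑ i ∈ α, z i) * ∏ i ∈ α, sgn (g (blk x i)) := by
    have h := sum_sgn_mul_sgn_subsets (liftG g x) z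
    rw [Fintype.card_fin] at h
    rw [mul_ite, mul_one, mul_zero, ← h]
    refine sum_congr rfl fun α _ => ?_
    rw [mul_comm, sgn_sum α (liftG g x)]
    rfl
  rw [← filter_filter, card_filter, Nat.cast_sum, mul_sum]
  push_cast
  simp_rw [hind, mul_sum]
  exact sum_comm

lemma abs_two_pow_mul_card_fiber_sub_le (hA : IsSafeAffine A) {δ : ℝ} (hδ0 : 0 ≤ δ)
    (hδ : ∀ S, |hatFC g S| ≤ δ) (z : Fin n → F2) :
    |(2 ^ n * #{x | x ∈ A ∧ liftG g x = z} : ℝ) - #{x | x ∈ A}|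
      ≤ ((1 + 2 * δ) ^ n - 1) * #{x | x ∈ A} := by
  have hbinom : ∑ α : Finset (Fin n), (2 * δ) ^ #α = (1 + 2 * δ) ^ n := by
    simpa [add_comm] using Fintype.sum_pow_mul_eq_add_pow (Fin n) (2 * δ) 1
  rw [two_pow_mul_card_fiber, ← add_sum_erase _ _ (mem_univ ∅)]
  simp only [sum_empty, sgn_zero, prod_empty, one_mul, sum_const, nsmul_one, add_sub_cancel_left]
  calc _ ≤ ∑ α ∈ univ.erase ∅, (#{x | x ∈ A} : ℝ) * (2 * δ) ^ #α := by
        refine (abs_sum_le_sum_abs _ _).trans (sum_le_sum fun α _ => ?_)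
        rw [abs_mul, abs_sgn, one_mul]
        exact abs_sum_prod_sgn_blk_le A hA g hδ0 hδ α
    _ = ((1 + 2 * δ) ^ n - 1) * #{x | x ∈ A} := by
        rw [← mul_sum, sum_erase_eq_sub (mem_univ _), hbinom, card_empty, pow_zero, mul_comm]

end Count

theorem stmt0_general {n b : ℕ}
    (g : (Fin b → F2) → F2) (δ : ℝ) (hδ0 : 0 ≤ δ)
    (hδ : ∀ S : Finset (Fin b), |hatFC g S| ≤ δ)
    (E : ℝ) (hE : E = (1 + 2 * δ) ^ n - 1)
    (A : AffineSubspace F2 ((Fin n × Fin b) → F2))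
    (hAne : (A : Set ((Fin n × Fin b) → F2)).Nonempty)
    (hAsafe : IsSafeAffine A)
    (m : ℕ) (hm : m = codim A)
    (z : Fin n → F2) :
    abs ((((A : Set ((Fin n × Fin b) → F2)) ∩ {x | liftG g x = z}).ncard : ℝ)
        - (2 : ℝ) ^ (n * b) / (2 : ℝ) ^ (n + m))
      ≤ E * ((2 : ℝ) ^ (n * b) / (2 : ℝ) ^ (n + m)) := by
  classical
  have hfiber : ((A : Set ((Fin n × Fin b) → F2)) ∩ {x | liftG g x = z}).ncard =
      #{x | x ∈ A ∧ liftG g x = z} := by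
    rw [← Set.ncard_coe_finset]
    congr 1
    ext x
    simp
  have hvol : (2 : ℝ) ^ (n * b) / 2 ^ (n + m) = #{x | x ∈ A} / 2 ^ n := by
    have h := card_mul_two_pow_codim hAne
    rw [Fintype.card_fin, ← hm] at h
    rw [← Nat.cast_inj (R := ℝ)] at h
    push_cast at h
    rw [← h, pow_add]
    field_simp
  have h2n : (0 : ℝ) < 2 ^ n := by positivity
  rw [hfiber, hvol, hE, ← mul_div_assoc, sub_div' h2n.ne', abs_div, abs_of_pos h2n]
  gcongr
  simpa only [mul_comm] using abs_two_pow_mul_card_fiber_sub_le g A hAsafe hδ0 hδ z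

/-- equidistribution count for a safe affine subspace
(Lemma `exponential_sum`, stated with explicit error `E = (1+2δ)^n − 1`). -/
theorem stmt0 {n b : ℕ} (hn : 0 < n) (hb : 0 < b)
    (g : (Fin b → F2) → F2) (δ : ℝ) (hδ0 : 0 ≤ δ)
    (hδ : ∀ S : Finset (Fin b), |hatFC g S| ≤ δ)
    (E : ℝ) (hE : E = (1 + 2 * δ) ^ n - 1)
    (A : AffineSubspace F2 ((Fin n × Fin b) → F2))
    (hAne : (A : Set ((Fin n × Fin b) → F2)).Nonempty)
    (hAsafe : IsSafeAffine A)
    (m : ℕ) (hm : m = codim A)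
    (z : Fin n → F2) :
    abs ((((A : Set ((Fin n × Fin b) → F2)) ∩ {x | liftG g x = z}).ncard : ℝ)
        - (2 : ℝ) ^ (n * b) / (2 : ℝ) ^ (n + m))
      ≤ E * ((2 : ℝ) ^ (n * b) / (2 : ℝ) ^ (n + m)) :=
  stmt0_general g δ hδ0 hδ E hE A hAne hAsafe m hm z
end
end

section
/- Let b ≥ 1 and k ≥ 1 be integers and let g : 𝔽₂^[b] → 𝔽₂. Define g^{⊕k} : 𝔽₂^{[k]×[b]} → 𝔽₂ by g^{⊕k}(x) = Σ_{i=1}^{k} g(x(i)) computed in 𝔽₂, where x(i) is the restriction of x to block i. Then the maximum over T ⊆ [k]×[b] of |ĝ^{⊕k}(T)| equals (the maximum over S ⊆ [b] of |ĝ(S)|)^k. -/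
/-!
The Fourier character of `x ↦ ∑ᵢ g (x(i))` at `T` factors over the blocks, and so does the
uniform sum over `𝔽₂^{ι×[b]} ≅ ∏ᵢ 𝔽₂^{[b]}`; hence `ĝ^{⊕k}(T) = ∏ᵢ ĝ(Tᵢ)`, where `Tᵢ` is the
section of `T` in block `i`. Each factor is at most the largest `|ĝ(S)|`, and `T = [k] × S`
attains the bound.
-/

open Finset

noncomputable section

lemma neg_one_pow_val_add (a c : F2) :
    (-1 : ℝ) ^ (a + c).val = (-1 : ℝ) ^ a.val * (-1 : ℝ) ^ c.val := by
  rw [ZMod.val_add, ← pow_add, ← neg_one_pow_eq_pow_mod_two]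

lemma neg_one_pow_val_sum {ι : Type*} (s : Finset ι) (f : ι → F2) :
    (-1 : ℝ) ^ (∑ i ∈ s, f i).val = ∏ i ∈ s, (-1 : ℝ) ^ (f i).val := by
  induction s using Finset.cons_induction with
  | empty => simp
  | cons a s ha ih => rw [sum_cons, prod_cons, neg_one_pow_val_add, ih]

section Blocks

variable {ι : Type*} [Fintype ι] [DecidableEq ι] {b : ℕ}

lemma sum_prod_blk (f : ι → (Fin b → F2) → ℝ) :
    ∑ x : ι × Fin b → F2, ∏ i, f i (blk x i) = ∏ i, ∑ y : Fin b → F2, f i y := by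
  rw [Fintype.prod_sum]
  exact (Equiv.curry ι (Fin b) F2).sum_comp fun y => ∏ i, f i (y i)

lemma sum_eq_sum_sum_section {β M : Type*} [Fintype β] [DecidableEq β] [AddCommMonoid M]
    (T : Finset (ι × β)) (f : ι × β → M) :
    ∑ p ∈ T, f p = ∑ i, ∑ j ∈ univ.filter (fun j => (i, j) ∈ T), f (i, j) :=
  sum_finset_product T univ _ (by simp)

lemma neg_one_pow_sum_blk_add (g : (Fin b → F2) → F2) (T : Finset (ι × Fin b))
    (x : ι × Fin b → F2) :
    (-1 : ℝ) ^ ((∑ i, g (blk x i)).val + ∑ p ∈ T, (x p).val) =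
      ∏ i, (-1 : ℝ) ^ ((g (blk x i)).val +
        ∑ j ∈ univ.filter (fun j => (i, j) ∈ T), (blk x i j).val) := by
  simp_rw [pow_add, prod_mul_distrib, neg_one_pow_val_sum, sum_eq_sum_sum_section T,
    ← prod_pow_eq_pow_sum]
  rfl

theorem hatFC_sum_blk (g : (Fin b → F2) → F2) (T : Finset (ι × Fin b)) :
    hatFC (fun x : ι × Fin b → F2 => ∑ i, g (blk x i)) T =
      ∏ i, hatFC g (univ.filter fun j => (i, j) ∈ T) := by
  unfold hatFC
  simp only [neg_one_pow_sum_blk_add]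
  rw [sum_prod_blk fun i y =>
      (-1 : ℝ) ^ ((g y).val + ∑ j ∈ univ.filter (fun j => (i, j) ∈ T), (y j).val),
    prod_mul_distrib, prod_const, card_univ, Fintype.card_prod, Fintype.card_fin,
    ← inv_pow, ← inv_pow, ← pow_mul, mul_comm b]

lemma abs_hatFC_sum_blk_le (g : (Fin b → F2) → F2) (T : Finset (ι × Fin b)) :
    |hatFC (fun x : ι × Fin b → F2 => ∑ i, g (blk x i)) T| ≤
      (univ.sup' univ_nonempty fun S : Finset (Fin b) => |hatFC g S|) ^ Fintype.card ι := by
  rw [hatFC_sum_blk, abs_prod, ← card_univ, ← prod_const]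
  exact prod_le_prod (fun _ _ => abs_nonneg _) fun _ _ =>
    le_sup' (fun S => |hatFC g S|) (mem_univ _)

lemma abs_hatFC_sum_blk_univ_product (g : (Fin b → F2) → F2) (S : Finset (Fin b)) :
    |hatFC (fun x : ι × Fin b → F2 => ∑ i, g (blk x i)) (univ ×ˢ S)| =
      |hatFC g S| ^ Fintype.card ι := by
  rw [hatFC_sum_blk, abs_prod, ← card_univ, ← prod_const]
  refine prod_congr rfl fun i _ => ?_
  congr 2
  ext j
  simp

end Blocks

theorem stmt9_general {b k : ℕ}
    (g : (Fin b → F2) → F2) :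
    (Finset.univ.sup' Finset.univ_nonempty
        (fun T : Finset (Fin k × Fin b) =>
          |hatFC (fun x : (Fin k × Fin b) → F2 => ∑ i : Fin k, g (blk x i)) T|))
      = (Finset.univ.sup' Finset.univ_nonempty
          (fun S : Finset (Fin b) => |hatFC g S|)) ^ k := by
  refine le_antisymm (sup'_le _ _ fun T _ => ?_) ?_
  · simpa using abs_hatFC_sum_blk_le g T
  · obtain ⟨S, -, hS⟩ := exists_mem_eq_sup' univ_nonempty fun S : Finset (Fin b) => |hatFC g S|
    calc _ = |hatFC (fun x : Fin k × Fin b → F2 => ∑ i, g (blk x i)) (univ ×ˢ S)| := by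
          rw [abs_hatFC_sum_blk_univ_product, Fintype.card_fin, hS]
      _ ≤ _ := le_sup' (fun T : Finset (Fin k × Fin b) => |hatFC _ T|) (mem_univ _)

/-- the largest Fourier coefficient of the XOR of `k` disjoint copies of a
gadget `g` is the `k`-th power of the largest Fourier coefficient of `g`. -/
theorem stmt9 {b k : ℕ} (hb : 0 < b) (hk : 0 < k)
    (g : (Fin b → F2) → F2) :
    (Finset.univ.sup' Finset.univ_nonempty
        (fun T : Finset (Fin k × Fin b) =>
          |hatFC (fun x : (Fin k × Fin b) → F2 => ∑ i : Fin k, g (blk x i)) T|))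
      = (Finset.univ.sup' Finset.univ_nonempty
          (fun S : Finset (Fin b) => |hatFC g S|)) ^ k :=
  stmt9_general g
end
end

section
/- Let G = (V,E) be a finite simple graph and let f : V → 𝔽₂ satisfy Σ_{v∈V} f(v) = 1. Let S ⊆ E, let α : S → 𝔽₂, and define f_α(v) = f(v) + Σ_{e ∈ S, v ∈ e} α(e) in 𝔽₂. Suppose C₁ is a connected component of the graph (V, E∖S) with Σ_{v∈C₁} f_α(v) = 1, and every other connected component D of (V, E∖S) satisfies Σ_{v∈D} f_α(v) = 0. For u ∈ V, let N_u be the number of z : (E∖S) → 𝔽₂ such that, writing x : E → 𝔽₂ for the common extension of α and z, one has Σ_{e ∈ E, w ∈ e} x(e) = f(w) for every vertex w ≠ u, and Σ_{e ∈ E, u ∈ e} x(e) = f(u) + 1. Then N_u = N_v > 0 for all u, v ∈ C₁, and N_u = 0 for every u ∉ C₁. -/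
open Finset
open scoped Classical

noncomputable section

/-- The sum, in 𝔽₂, of the values of an edge-assignment `x` (defined on the edges in the
set `S`) over the edges of `S` incident to the vertex `u`. -/
def vdeg {V : Type*} [Fintype V] (S : Set (Sym2 V)) (x : {e : Sym2 V // e ∈ S} → F2)
    (u : V) : F2 :=
  ∑ e : {e : Sym2 V // e ∈ S}, if u ∈ (e : Sym2 V) then x e else 0

/-- The common extension of `α` (on the fixed edges `S`) and `z` (on the free edges). -/
def extAssign {V : Type*} (G : SimpleGraph V) (S : Set (Sym2 V))
    (α : {e : Sym2 V // e ∈ S} → F2) (z : {e : Sym2 V // e ∈ G.edgeSet \ S} → F2)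
    (e : {e : Sym2 V // e ∈ G.edgeSet}) : F2 :=
  if h : (e : Sym2 V) ∈ S then α ⟨e, h⟩ else z ⟨e, ⟨e.2, h⟩⟩

variable {V : Type*} [Fintype V]

lemma vdeg_add (T : Set (Sym2 V)) (x y : {e : Sym2 V // e ∈ T} → F2) (w : V) :
    vdeg T (x + y) w = vdeg T x w + vdeg T y w := by
  simp [vdeg, ← Finset.sum_add_distrib, ite_add_ite]

lemma vdeg_zero (T : Set (Sym2 V)) (w : V) : vdeg T (fun _ => (0:F2)) w = 0 := by
  simp [vdeg]

lemma vdeg_single (T : Set (Sym2 V)) (e0 : {e : Sym2 V // e ∈ T}) (w : V) :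
    vdeg T (fun e => if e = e0 then 1 else 0) w = if w ∈ (e0 : Sym2 V) then 1 else 0 := by
  rw [vdeg]
  rw [Finset.sum_congr rfl (g := fun e => if e = e0 then (if w ∈ (e0 : Sym2 V) then 1 else 0) else 0)]
  · simp
  · intro e _
    by_cases h : e = e0 <;> simp [h]

lemma walk_flip (G' : SimpleGraph V) (T : Set (Sym2 V)) (hT : G'.edgeSet ⊆ T)
    {u v : V} (p : G'.Walk u v) :
    ∃ δ : {e : Sym2 V // e ∈ T} → F2, ∀ w,
      vdeg T δ w = (if w = u then 1 else 0) + (if w = v then 1 else 0) := by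
  induction p with
  | nil =>
    refine ⟨fun _ => 0, fun w => ?_⟩
    rw [vdeg_zero]
    have h2 : (1:F2) + 1 = 0 := by decide
    split <;> simp [h2]
  | @cons a b c h p ih =>
    obtain ⟨δ', hδ'⟩ := ih
    have he : s(a, b) ∈ T := hT (G'.mem_edgeSet.2 h)
    refine ⟨δ' + (fun e => if e = ⟨s(a,b), he⟩ then 1 else 0), fun w => ?_⟩
    rw [vdeg_add, hδ', vdeg_single]
    have hab : a ≠ b := h.ne
    have hm : (w ∈ ((⟨s(a,b), he⟩ : {e : Sym2 V // e ∈ T}) : Sym2 V)) ↔ w = a ∨ w = b := by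
      simp [Sym2.mem_iff]
    simp only [hm]
    by_cases h1 : w = a <;> by_cases h2 : w = b <;> by_cases h3 : w = c <;>
      simp_all <;> decide

lemma comp_parity (G' : SimpleGraph V) (T : Set (Sym2 V)) (hT : T ⊆ G'.edgeSet)
    (z : {e : Sym2 V // e ∈ T} → F2) (D : G'.ConnectedComponent) :
    ∑ w : V, D.supp.indicator (vdeg T z) w = 0 := by
  have step1 : ∑ w : V, D.supp.indicator (vdeg T z) w
      = ∑ e : {e : Sym2 V // e ∈ T}, ∑ w : V,
          (if w ∈ D.supp then (if w ∈ (e : Sym2 V) then z e else 0) else 0) := by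
    rw [← Finset.sum_comm]
    refine Finset.sum_congr rfl fun w _ => ?_
    rw [Set.indicator_apply]
    by_cases h : w ∈ D.supp <;> simp [h, vdeg]
  rw [step1]
  refine Finset.sum_eq_zero fun e _ => ?_
  obtain ⟨e, he⟩ := e
  induction e using Sym2.ind with
  | _ a b =>
    have hadj : G'.Adj a b := (G'.mem_edgeSet).1 (hT he)
    have hab : a ≠ b := hadj.ne
    have hsame : (a ∈ D.supp) ↔ (b ∈ D.supp) := by
      simp only [SimpleGraph.ConnectedComponent.mem_supp_iff]
      rw [SimpleGraph.ConnectedComponent.connectedComponentMk_eq_of_adj hadj]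
    set c := z ⟨s(a,b), he⟩ with hc
    have hfun : ∀ w : V,
        (if w ∈ D.supp then (if w ∈ (s(a,b) : Sym2 V) then c else 0) else 0)
        = (if w = a ∧ a ∈ D.supp then c else 0) + (if w = b ∧ a ∈ D.supp then c else 0) := by
      intro w
      by_cases h1 : w = a
      · subst h1
        by_cases hP : w ∈ D.supp <;> simp [hP, hab, Sym2.mem_iff]
      · by_cases h2 : w = b
        · subst h2
          by_cases hP : w ∈ D.supp
          · simp [hP, h1, Sym2.mem_iff, hsame.2 hP]
          · have ha : a ∉ D.supp := fun h => hP (hsame.1 h)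
            rw [SimpleGraph.ConnectedComponent.mem_supp_iff] at ha
            simp [hP, h1, Sym2.mem_iff, ha]
        · simp [h1, h2, Sym2.mem_iff]
    calc ∑ w : V, (if w ∈ D.supp then (if w ∈ (s(a,b) : Sym2 V) then c else 0) else 0)
        = ∑ w : V, ((if w = a ∧ a ∈ D.supp then c else 0) + (if w = b ∧ a ∈ D.supp then c else 0)) :=
          Finset.sum_congr rfl fun w _ => hfun w
      _ = (if a ∈ D.supp then c else 0) + (if a ∈ D.supp then c else 0) := by
          rw [Finset.sum_add_distrib]
          simp [ite_and, Finset.sum_ite_eq']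
      _ = 0 := by
          by_cases hP : a ∈ D.supp <;> simp [hP]
          exact CharTwo.add_self_eq_zero c

lemma sum_indicator_point (s : Set V) (u : V) :
    ∑ w : V, s.indicator (fun w => if w = u then (1:F2) else 0) w
      = if u ∈ s then 1 else 0 := by
  have : ∀ w : V, s.indicator (fun w => if w = u then (1:F2) else 0) w
      = if w = u then (if u ∈ s then (1:F2) else 0) else 0 := by
    intro w
    rw [Set.indicator_apply]
    by_cases h : w = u
    · subst h; by_cases hs : w ∈ s <;> simp [hs]
    · simp [h]
  rw [Finset.sum_congr rfl fun w _ => this w, Finset.sum_ite_eq' Finset.univ u]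
  simp

lemma exists_assign (G' : SimpleGraph V) (T : Set (Sym2 V)) (hT : G'.edgeSet ⊆ T) :
    ∀ (n : ℕ) (t : V → F2), (Finset.univ.filter (fun w => t w = 1)).card = n →
      (∀ D : G'.ConnectedComponent, ∑ w : V, D.supp.indicator t w = 0) →
      ∃ z : {e : Sym2 V // e ∈ T} → F2, ∀ w, vdeg T z w = t w := by
  intro n
  induction n using Nat.strong_induction_on with
  | _ n ih =>
    intro t hn hcomp
    by_cases h0 : ∀ w, t w = 0
    · exact ⟨fun _ => 0, fun w => by rw [vdeg_zero, h0]⟩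
    push_neg at h0
    obtain ⟨u, hu⟩ := h0
    have hval : ∀ c : F2, c ≠ 0 → c = 1 := by decide
    have hu1 : t u = 1 := hval _ hu
    set D := G'.connectedComponentMk u with hD
    have huD : u ∈ D.supp := by
      rw [SimpleGraph.ConnectedComponent.mem_supp_iff]
    have hv : ∃ v, v ≠ u ∧ v ∈ D.supp ∧ t v = 1 := by
      by_contra hc
      push_neg at hc
      have hsum : ∑ w : V, D.supp.indicator t w = t u := by
        rw [Finset.sum_eq_single u]
        · simp [Set.indicator_apply, huD]
        · intro w _ hw
          rw [Set.indicator_apply]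
          by_cases hws : w ∈ D.supp
          · have : t w = 0 := by
              by_contra h'
              exact hc w hw hws (hval _ h')
            simp [hws, this]
          · simp [hws]
        · simp
      rw [hcomp D, hu1] at hsum
      exact one_ne_zero hsum.symm
    obtain ⟨v, hvu, hvD, hv1⟩ := hv
    have hreach : G'.Reachable u v := by
      rw [SimpleGraph.ConnectedComponent.mem_supp_iff] at hvD
      exact (SimpleGraph.ConnectedComponent.exact hvD).symm
    obtain ⟨p⟩ := hreach
    obtain ⟨δ, hδ⟩ := walk_flip G' T hT p
    set t' : V → F2 := fun w => t w + ((if w = u then 1 else 0) + (if w = v then 1 else 0))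
      with ht'
    have ht'u : t' u = 0 := by simp [ht', hu1, hvu.symm]; decide
    have ht'v : t' v = 0 := by simp [ht', hv1, hvu]; decide
    have ht'w : ∀ w, w ≠ u → w ≠ v → t' w = t w := by
      intro w h1 h2; simp [ht', h1, h2]
    have hfil : Finset.univ.filter (fun w => t' w = 1)
        = ((Finset.univ.filter (fun w => t w = 1)).erase u).erase v := by
      ext w
      simp only [Finset.mem_erase, Finset.mem_filter, Finset.mem_univ, true_and]
      constructor
      · intro hw
        refine ⟨fun h => ?_, fun h => ?_, ?_⟩
        · rw [h, ht'v] at hw; exact one_ne_zero hw.symm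
        · rw [h, ht'u] at hw; exact one_ne_zero hw.symm
        · by_cases h1 : w = u
          · rw [h1, ht'u] at hw; exact absurd hw.symm one_ne_zero
          by_cases h2 : w = v
          · rw [h2, ht'v] at hw; exact absurd hw.symm one_ne_zero
          rwa [ht'w w h1 h2] at hw
      · rintro ⟨h2, h1, hw⟩
        rwa [ht'w w h1 h2]
    have hlt : (Finset.univ.filter (fun w => t' w = 1)).card < n := by
      rw [hfil]
      calc (((Finset.univ.filter (fun w => t w = 1)).erase u).erase v).card
          ≤ ((Finset.univ.filter (fun w => t w = 1)).erase u).card :=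
            Finset.card_erase_le.trans_eq rfl
        _ < (Finset.univ.filter (fun w => t w = 1)).card := by
            apply Finset.card_erase_lt_of_mem
            simp [hu1]
        _ = n := hn
    have hcomp' : ∀ D' : G'.ConnectedComponent, ∑ w : V, D'.supp.indicator t' w = 0 := by
      intro D'
      have split : ∀ w, D'.supp.indicator t' w
          = D'.supp.indicator t w
            + (D'.supp.indicator (fun w => if w = u then 1 else 0) w
               + D'.supp.indicator (fun w => if w = v then 1 else 0) w) := by
        intro w
        simp only [Set.indicator_apply]
        by_cases h : w ∈ D'.supp <;> simp [h, ht']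
      rw [Finset.sum_congr rfl fun w _ => split w, Finset.sum_add_distrib,
        Finset.sum_add_distrib, hcomp D', sum_indicator_point, sum_indicator_point]
      have hmem : u ∈ D'.supp ↔ v ∈ D'.supp := by
        rw [SimpleGraph.ConnectedComponent.mem_supp_iff] at hvD ⊢
        rw [SimpleGraph.ConnectedComponent.mem_supp_iff, hvD]
      by_cases h : u ∈ D'.supp
      · simp [h, hmem.1 h]; decide
      · have hv' : v ∉ D'.supp := fun h' => h (hmem.2 h')
        rw [SimpleGraph.ConnectedComponent.mem_supp_iff] at hv'
        simp [h, hv']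
    obtain ⟨z', hz'⟩ := ih _ hlt t' rfl hcomp'
    refine ⟨z' + δ, fun w => ?_⟩
    rw [vdeg_add, hz' w, hδ w, ht']
    have : ∀ a b c : F2, (a + (b + c)) + (b + c) = a := by decide
    exact this _ _ _

lemma vdeg_split (G : SimpleGraph V) (S : Set (Sym2 V)) (hS : S ⊆ G.edgeSet)
    (α : {e : Sym2 V // e ∈ S} → F2) (z : {e : Sym2 V // e ∈ G.edgeSet \ S} → F2) (w : V)
    {ext : {e : Sym2 V // e ∈ G.edgeSet} → F2}
    (hext : ext = fun (e : {e : Sym2 V // e ∈ G.edgeSet}) =>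
      if h : (e : Sym2 V) ∈ S then α ⟨e, h⟩ else z ⟨e, ⟨e.2, h⟩⟩) :
    vdeg G.edgeSet ext w = vdeg S α w + vdeg (G.edgeSet \ S) z w := by
  subst hext
  have key := Fintype.sum_equiv (Equiv.Set.sumDiffSubset hS)
    (fun i : ↑S ⊕ ↑(G.edgeSet \ S) => Sum.elim
      (fun e : {e : Sym2 V // e ∈ S} => if w ∈ (e : Sym2 V) then α e else 0)
      (fun e : {e : Sym2 V // e ∈ G.edgeSet \ S} => if w ∈ (e : Sym2 V) then z e else 0) i)
    (fun e : {e : Sym2 V // e ∈ G.edgeSet} => if w ∈ (e : Sym2 V) then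
      (if h : (e : Sym2 V) ∈ S then α ⟨e, h⟩ else z ⟨e, ⟨e.2, h⟩⟩) else 0)
    ?_
  · rw [Fintype.sum_sum_type] at key
    rw [vdeg, vdeg, vdeg]
    convert key.symm using 2 <;> congr!
  · rintro (e | e)
    · rw [Equiv.Set.sumDiffSubset_apply_inl]
      by_cases h : w ∈ (e : Sym2 V)
      · simp only [Sum.elim_inl, Set.inclusion, if_pos h, dif_pos e.2]
      · simp only [Sum.elim_inl, Set.inclusion, if_neg h]
    · rw [Equiv.Set.sumDiffSubset_apply_inr]
      by_cases h : w ∈ (e : Sym2 V)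
      · simp only [Sum.elim_inr, Set.inclusion, if_pos h, dif_neg e.2.2]
      · simp only [Sum.elim_inr, Set.inclusion, if_neg h]

lemma sum_indicator_target (s : Set V) (g : V → F2) (u : V) :
    ∑ w : V, s.indicator (fun w => g w + (if w = u then 1 else 0)) w
      = (∑ w : V, s.indicator g w) + (if u ∈ s then 1 else 0) := by
  rw [← sum_indicator_point s u, ← Finset.sum_add_distrib]
  refine Finset.sum_congr rfl fun w _ => ?_
  simp only [Set.indicator_apply]
  by_cases h : w ∈ s <;> simp [h]


end

noncomputable section

/-- conditioned on the fixed values `α`, the number of completions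
placing the violated vertex ("root") at `u` is the same positive number for every `u`
in the odd component `C₁`, and zero outside it (Lemma `root_is_hidden_unlifted`). -/
theorem stmt13 {V : Type*} [Fintype V] (G : SimpleGraph V)
    (f : V → F2) (hf : (∑ v : V, f v) = 1)
    (S : Set (Sym2 V)) (hS : S ⊆ G.edgeSet)
    (α : {e : Sym2 V // e ∈ S} → F2)
    (fα : V → F2) (hfα : ∀ v, fα v = f v + vdeg S α v)
    (C₁ : (G.deleteEdges S).ConnectedComponent)
    (hC₁ : (∑ v : V, C₁.supp.indicator fα v) = 1)
    (hother : ∀ D : (G.deleteEdges S).ConnectedComponent, D ≠ C₁ →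
      (∑ v : V, D.supp.indicator fα v) = 0)
    (Nset : V → Set ({e : Sym2 V // e ∈ G.edgeSet \ S} → F2))
    (hNset : ∀ u : V, Nset u =
      {z | (∀ w : V, w ≠ u → vdeg G.edgeSet (extAssign G S α z) w = f w) ∧
           vdeg G.edgeSet (extAssign G S α z) u = f u + 1}) :
    (∀ u ∈ C₁.supp, ∀ v ∈ C₁.supp,
        (Nset u).ncard = (Nset v).ncard ∧ 0 < (Nset u).ncard) ∧
    (∀ u : V, u ∉ C₁.supp → (Nset u).ncard = 0) := by
  have hTE : (G.deleteEdges S).edgeSet = G.edgeSet \ S := SimpleGraph.edgeSet_deleteEdges S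
  have hT1 : (G.deleteEdges S).edgeSet ⊆ G.edgeSet \ S := hTE.le
  have hT2 : G.edgeSet \ S ⊆ (G.deleteEdges S).edgeSet := hTE.ge
  have A1 : ∀ a x y : F2, (a + x) + (x + y) = a + y := by decide
  have A2 : ∀ a x y : F2, (a + y) + (x + y) = a + x := by decide
  have A3 : ∀ a b : F2, a + b + b = a := by decide
  -- membership characterization
  have hchar : ∀ (u : V) (z : {e : Sym2 V // e ∈ G.edgeSet \ S} → F2),
      z ∈ Nset u ↔ ∀ w, vdeg (G.edgeSet \ S) z w = fα w + (if w = u then 1 else 0) := by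
    intro u z
    rw [hNset u]
    simp only [Set.mem_setOf_eq]
    have hsplit : ∀ w, vdeg G.edgeSet (extAssign G S α z) w
        = vdeg S α w + vdeg (G.edgeSet \ S) z w :=
      fun w => vdeg_split G S hS α z w rfl
    have arith : ∀ a x b : F2, a + x = b ↔ x = b + a := by decide
    constructor
    · rintro ⟨h1, h2⟩ w
      by_cases hw : w = u
      · subst hw
        rw [hsplit w, arith] at h2
        rw [h2, hfα w, if_pos rfl]; ring
      · have := h1 w hw
        rw [hsplit w, arith] at this
        rw [this, hfα w, if_neg hw]; ring
    · intro h
      constructor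
      · intro w hw
        rw [hsplit w, arith, h w, if_neg hw, hfα w]; ring
      · rw [hsplit u, arith, h u, if_pos rfl, hfα u]; ring
  -- zero outside C₁
  have hzero : ∀ u : V, u ∉ C₁.supp → Nset u = ∅ := by
    intro u hu
    rw [Set.eq_empty_iff_forall_notMem]
    intro z hz
    rw [hchar u z] at hz
    set D := (G.deleteEdges S).connectedComponentMk u with hD
    have huD : u ∈ D.supp := by rw [SimpleGraph.ConnectedComponent.mem_supp_iff]
    have hDne : D ≠ C₁ := by
      intro h
      exact hu (by rw [SimpleGraph.ConnectedComponent.mem_supp_iff, ← h])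
    have hp := comp_parity (G.deleteEdges S) (G.edgeSet \ S) hT2 z D
    have heq : ∑ w : V, D.supp.indicator (fun w => fα w + (if w = u then 1 else 0)) w = 0 := by
      refine Eq.trans (Finset.sum_congr rfl fun w _ => ?_) hp
      simp only [Set.indicator_apply]
      by_cases h : w ∈ D.supp
      · rw [if_pos h, if_pos h, hz w]
      · rw [if_neg h, if_neg h]
    rw [sum_indicator_target, hother D hDne, if_pos huD, zero_add] at heq
    exact one_ne_zero heq
  -- existence inside C₁
  have hex : ∀ u, u ∈ C₁.supp → ∃ z, z ∈ Nset u := by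
    intro u hu
    have hcs : ∀ D : (G.deleteEdges S).ConnectedComponent,
        ∑ w : V, D.supp.indicator (fun w => fα w + (if w = u then 1 else 0)) w = 0 := by
      intro D
      rw [sum_indicator_target]
      by_cases h : D = C₁
      · subst h
        rw [hC₁, if_pos hu]; decide
      · have hnot : u ∉ D.supp := by
          intro h'
          rw [SimpleGraph.ConnectedComponent.mem_supp_iff] at h' hu
          exact h (h'.symm.trans hu)
        rw [hother D h, if_neg hnot, zero_add]
    obtain ⟨z, hz⟩ := exists_assign (G.deleteEdges S) (G.edgeSet \ S) hT1 _
      (fun w => fα w + (if w = u then 1 else 0)) rfl hcs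
    exact ⟨z, (hchar u z).2 hz⟩
  -- equal cardinality inside C₁
  have hcard : ∀ u ∈ C₁.supp, ∀ v ∈ C₁.supp, (Nset u).ncard = (Nset v).ncard := by
    intro u hu v hv
    rw [SimpleGraph.ConnectedComponent.mem_supp_iff] at hu hv
    have hr : (G.deleteEdges S).Reachable u v :=
      SimpleGraph.ConnectedComponent.exact (hu.trans hv.symm)
    obtain ⟨p⟩ := hr
    obtain ⟨δ, hδ⟩ := walk_flip (G.deleteEdges S) (G.edgeSet \ S) hT1 p
    have himg : Nset v = (fun z => z + δ) '' (Nset u) := by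
      ext z'
      constructor
      · intro hz'
        refine ⟨z' + δ, (hchar u _).2 fun w => ?_, funext fun e => A3 _ _⟩
        rw [vdeg_add, (hchar v z').1 hz' w, hδ w]
        exact A2 _ _ _
      · rintro ⟨z, hz, rfl⟩
        refine (hchar v _).2 fun w => ?_
        rw [vdeg_add, (hchar u z).1 hz w, hδ w]
        exact A1 _ _ _
    rw [himg, Set.ncard_image_of_injective _ (add_left_injective δ)]
  refine ⟨fun u hu v hv => ⟨hcard u hu v hv, ?_⟩, fun u hu => by
    rw [hzero u hu]; exact Set.ncard_empty _⟩
  obtain ⟨z, hz⟩ := hex u hu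
  exact (Set.ncard_pos (Set.toFinite _)).2 ⟨z, hz⟩
end
end

section
/- Let d ≥ 1 be a real number and let G = (V,E) be a finite simple graph on N = |V| vertices such that for every S ⊆ V, the number of edges with exactly one endpoint in S is at least (d/5)·min(|S|, N−|S|). Let F ⊆ E satisfy |F| < N/500. Then the graph (V, E∖F) has a connected component with at least N·(1 − 1/(50d)) vertices. -/
open Finset
open scoped Classical

noncomputable section

/-!
Every union `S` of components of `G \ F` has its `G`-edge boundary inside `F`, so expansion gives
`(d/5) · min(|S|, N - |S|) ≤ |F| < N/500`, i.e. `min(|S|, N - |S|) < x := N/(100d)`.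
If no component has more than `N - x` vertices, then every component has fewer than `x`, and
adding components one at a time yields a union with between `x` and `2x` vertices; its complement
has more than `N - 2x ≥ x` vertices, a contradiction.
-/

theorem Finset.exists_subset_sum_mem_Ico {ι M : Type*} [AddCommMonoid M] [LinearOrder M]
    [IsOrderedCancelAddMonoid M] (s : Finset ι) (f : ι → M) {x : M} (hx : 0 < x)
    (hf : ∀ i ∈ s, f i < x) (hs : x ≤ ∑ i ∈ s, f i) :
    ∃ t ⊆ s, ∑ i ∈ t, f i ∈ Set.Ico x (x + x) := by
  induction s using Finset.induction_on with
  | empty => exact absurd hs (by simpa using hx)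
  | insert a s ha ih =>
    rw [forall_mem_insert] at hf
    by_cases hs' : x ≤ ∑ i ∈ s, f i
    · obtain ⟨t, hts, ht⟩ := ih hf.2 hs'
      exact ⟨t, hts.trans (subset_insert a s), ht⟩
    · refine ⟨insert a s, subset_rfl, hs, ?_⟩
      rw [sum_insert ha]
      exact add_lt_add hf.1 (not_le.mp hs')

theorem exists_sub_lt_of_forall_min_sum_lt {ι K : Type*} [Fintype ι] [Field K] [LinearOrder K]
    [IsStrictOrderedRing K] (f : ι → K) {x : K} (hx0 : 0 < x)
    (hf : ∀ A : Finset ι, min (∑ i ∈ A, f i) (∑ i, f i - ∑ i ∈ A, f i) < x)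
    (hx : 3 * x ≤ ∑ i, f i) : ∃ i, ∑ j, f j - f i < x := by
  by_contra! hbig
  have hsmall (i : ι) : f i < x := by
    simpa [min_lt_iff, (hbig i).not_gt] using hf {i}
  obtain ⟨A, -, hA, hA'⟩ :=
    Finset.exists_subset_sum_mem_Ico univ f hx0 (fun i _ => hsmall i) (by linarith)
  exact (hf A).not_ge (le_min hA (by linarith))

namespace SimpleGraph

variable {V : Type*}

def edgeBoundary [Fintype V] (G : SimpleGraph V) [Fintype G.edgeSet] (S : Finset V) :
    Finset (Sym2 V) :=
  G.edgeFinset.filter (fun e => ∃ a ∈ S, ∃ b ∉ S, e = s(a, b))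

theorem edgeBoundary_subset_of_forall_adj_mem [Fintype V] {G : SimpleGraph V}
    [Fintype G.edgeSet] {F : Finset (Sym2 V)} {S : Finset V}
    (hS : ∀ a ∈ S, ∀ b, (G.deleteEdges ↑F).Adj a b → b ∈ S) : G.edgeBoundary S ⊆ F := by
  intro e he
  obtain ⟨heG, a, ha, b, hb, rfl⟩ := Finset.mem_filter.mp he
  by_contra hF
  exact hb (hS a ha b ((G.deleteEdges_adj ..).mpr ⟨G.mem_edgeFinset.mp heG, hF⟩))

theorem card_filter_connectedComponentMk_mem [Fintype V] (H : SimpleGraph V)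
    (A : Finset H.ConnectedComponent) :
    #{v | H.connectedComponentMk v ∈ A} = ∑ c ∈ A, c.supp.ncard := by
  rw [← sum_card_fiberwise_eq_card_filter]
  refine sum_congr rfl fun c _ => ?_
  rw [← Set.ncard_coe_finset, coe_filter]
  congr 1
  ext v
  simp [ConnectedComponent.mem_supp_iff]

end SimpleGraph

theorem stmt14_general {V : Type*} [Fintype V] (d : ℝ) (hd : 1 ≤ d) (G : SimpleGraph V)
    (hexp : ∀ S : Finset V,
      d / 5 * min (S.card : ℝ) ((Fintype.card V : ℝ) - (S.card : ℝ)) ≤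
        ((G.edgeFinset.filter
            (fun e => ∃ a ∈ S, ∃ b ∉ S, e = s(a, b))).card : ℝ))
    (F : Finset (Sym2 V))
    (hFcard : (F.card : ℝ) < (Fintype.card V : ℝ) / 500) :
    ∃ C : (G.deleteEdges ↑F).ConnectedComponent,
      (Fintype.card V : ℝ) * (1 - 1 / (50 * d)) ≤ (C.supp.ncard : ℝ) := by
  set G' := G.deleteEdges ↑F
  set N : ℝ := (Fintype.card V : ℝ)
  have hN : 0 < N := by linarith [(F.card.cast_nonneg : (0 : ℝ) ≤ F.card)]
  have hd0 : 0 < d := by linarith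
  let size (c : G'.ConnectedComponent) : ℝ := c.supp.ncard
  have hunion (A : Finset G'.ConnectedComponent) :
      #{v | G'.connectedComponentMk v ∈ A} = ∑ c ∈ A, size c := by
    simp [size, G'.card_filter_connectedComponentMk_mem]
  have htotal : ∑ c, size c = N := by
    simpa [N] using (hunion univ).symm
  have hmin (A : Finset G'.ConnectedComponent) :
      min (∑ c ∈ A, size c) (N - ∑ c ∈ A, size c) < N / (100 * d) := by
    set S : Finset V := {v | G'.connectedComponentMk v ∈ A}
    have hboundary : G.edgeBoundary S ⊆ F :=
      SimpleGraph.edgeBoundary_subset_of_forall_adj_mem fun a ha b hab =>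
        mem_filter.mpr ⟨mem_univ b,
          SimpleGraph.ConnectedComponent.connectedComponentMk_eq_of_adj hab ▸ (mem_filter.mp ha).2⟩
    have : d / 5 * min (#S : ℝ) (N - #S) ≤ #F :=
      (hexp S).trans (Nat.cast_le.mpr (card_le_card hboundary))
    rw [← hunion A, lt_div_iff₀ (by positivity)]
    linarith
  have hthird : 3 * (N / (100 * d)) ≤ N := by
    rw [mul_div_assoc', div_le_iff₀ (by positivity)]
    nlinarith
  obtain ⟨c, hc⟩ := exists_sub_lt_of_forall_min_sum_lt size (x := N / (100 * d)) (by positivity)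
    (by rwa [htotal]) (by rwa [htotal])
  refine ⟨c, ?_⟩
  rw [htotal] at hc
  have : N / (100 * d) ≤ N / (50 * d) := by gcongr; norm_num
  calc N * (1 - 1 / (50 * d)) = N - N / (50 * d) := by field_simp
    _ ≤ size c := by linarith

/-- deleting fewer than `|V|/500` edges from a graph with
`(d/5)·min(|S|,|V|−|S|)` edge expansion leaves a connected component on at least a
`1 − 1/(50d)` fraction of the vertices (Lemma `isoperimetric`). -/
theorem stmt14 {V : Type*} [Fintype V] (d : ℝ) (hd : 1 ≤ d) (G : SimpleGraph V)
    (hexp : ∀ S : Finset V,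
      d / 5 * min (S.card : ℝ) ((Fintype.card V : ℝ) - (S.card : ℝ)) ≤
        ((G.edgeFinset.filter
            (fun e => ∃ a ∈ S, ∃ b ∉ S, e = s(a, b))).card : ℝ))
    (F : Finset (Sym2 V)) (hF : ↑F ⊆ G.edgeSet)
    (hFcard : (F.card : ℝ) < (Fintype.card V : ℝ) / 500) :
    ∃ C : (G.deleteEdges ↑F).ConnectedComponent,
      (Fintype.card V : ℝ) * (1 - 1 / (50 * d)) ≤ (C.supp.ncard : ℝ) :=
  stmt14_general d hd G hexp F hFcard
end
end

section
/- Let G = (V,E) be a finite simple graph and let (S, ρ) with S ⊆ E and ρ : S → 𝔽₂ be a valid partial assignment. Let e₀ ∈ S and let (S∖{e₀}, ρ') be the partial assignment obtained by restricting ρ to S∖{e₀}. Then (S∖{e₀}, ρ') is also valid. -/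
open Finset
open scoped Classical

noncomputable section

/-- `f_ρ(v) = 1 + Σ_{e ∈ S, v ∈ e} ρ(e)` in 𝔽₂. -/
def fRho {V : Type*} [Fintype V] (S : Set (Sym2 V)) (ρ : {e : Sym2 V // e ∈ S} → F2)
    (v : V) : F2 :=
  1 + vdeg S ρ v

/-- A partial assignment `(S, ρ)` is valid if exactly one connected component `C` of
`(V, E∖S)` has `Σ_{v∈C} f_ρ(v) = 1`, and that component has more than `|V|/2`
vertices. -/
def IsValid {V : Type*} [Fintype V] (G : SimpleGraph V) (S : Set (Sym2 V))
    (ρ : {e : Sym2 V // e ∈ S} → F2) : Prop :=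
  (∃! C : (G.deleteEdges S).ConnectedComponent,
      (∑ v : V, C.supp.indicator (fRho S ρ) v) = 1) ∧
  (∀ C : (G.deleteEdges S).ConnectedComponent,
      (∑ v : V, C.supp.indicator (fRho S ρ) v) = 1 →
      Fintype.card V < 2 * C.supp.ncard)

/-! Unfixing `e₀ = s(a, b)` puts the edge `ab` back into the graph, so every component of the
new graph is a union of old components. In `𝔽₂` the function `f_ρ` changes only at `a` and `b`,
both times by `ρ(e₀)`; as `a` and `b` now lie in one component, the two changes cancel in every
component sum. Hence a new component is odd exactly when it contains the old odd component, and
it is then at least as large. -/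

namespace SimpleGraph.ConnectedComponent

variable {V : Type*} {H H' : SimpleGraph V}

lemma supp_subset_supp_map_ofLE (hle : H ≤ H') (C : H.ConnectedComponent) :
    C.supp ⊆ (C.map (Hom.ofLE hle)).supp :=
  fun _ hv => congrArg (map (Hom.ofLE hle)) hv

lemma sum_indicator_supp_eq_sum_map_ofLE [Fintype V] {M : Type*} [AddCommMonoid M]
    [Fintype H.ConnectedComponent] (hle : H ≤ H') (f : V → M) (D : H'.ConnectedComponent) :
    ∑ v, D.supp.indicator f v
      = ∑ C : H.ConnectedComponent with C.map (Hom.ofLE hle) = D, ∑ v, C.supp.indicator f v := by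
  rw [Finset.sum_comm]
  refine Finset.sum_congr rfl fun v _ => ?_
  simp [Set.indicator_apply, eq_comm]

lemma sum_indicator_supp_ite_mem_eq_zero [Fintype V] {R : Type*} [Ring R] [CharP R 2]
    {e : Sym2 V} (he : e ∈ H.edgeSet) (D : H.ConnectedComponent) (c : R) :
    ∑ v, D.supp.indicator (fun v => if v ∈ e then c else 0) v = 0 := by
  induction e using Sym2.ind with | _ a b => ?_
  rw [mem_edgeSet] at he
  have hab : a ∈ D.supp ↔ b ∈ D.supp := D.mem_supp_congr_adj he
  have hpoint : ∀ v, D.supp.indicator (fun v => if v ∈ s(a, b) then c else 0) v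
      = if a ∈ D.supp then (if v ∈ ({a, b} : Finset V) then c else 0) else 0 := by
    intro v
    rw [Set.indicator_apply]
    by_cases hv : v = a ∨ v = b
    · rcases hv with rfl | rfl
      · simp
      · simp [hab]
    · simp [hv]
  rw [Fintype.sum_congr _ _ hpoint, Finset.sum_ite_irrel, Finset.sum_ite_mem, Finset.univ_inter,
    Finset.sum_pair he.ne, CharTwo.add_self_eq_zero, Finset.sum_const_zero, ite_self]

end SimpleGraph.ConnectedComponent

section PartialAssignment

variable {V : Type*} [Fintype V]

lemma vdeg_eq_sum_toFinset (S : Set (Sym2 V)) (x : {e : Sym2 V // e ∈ S} → F2)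
    (ρ : Sym2 V → F2) (hx : ∀ e, x e = ρ e) (u : V) :
    vdeg S x u = ∑ e ∈ S.toFinset, if u ∈ e then ρ e else 0 := by
  simp only [vdeg, hx]
  exact (Finset.sum_subtype S.toFinset (fun _ => Set.mem_toFinset)
    (fun e => if u ∈ e then ρ e else 0)).symm

lemma vdeg_diff_singleton (S : Set (Sym2 V)) (ρ : {e : Sym2 V // e ∈ S} → F2)
    {e₀ : Sym2 V} (he₀ : e₀ ∈ S) (u : V) :
    vdeg S ρ u = vdeg (S \ {e₀}) (fun e => ρ ⟨e.1, e.2.1⟩) u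
      + if u ∈ e₀ then ρ ⟨e₀, he₀⟩ else 0 := by
  let ρ' : Sym2 V → F2 := fun e => if h : e ∈ S then ρ ⟨e, h⟩ else 0
  rw [vdeg_eq_sum_toFinset S ρ ρ' (fun e => by simp [ρ', e.2]),
    vdeg_eq_sum_toFinset _ _ ρ' (fun e => by simp [ρ', e.2.1]), Set.toFinset_sdiff,
    Set.toFinset_singleton, ← Finset.erase_eq,
    ← Finset.sum_erase_add _ _ (Set.mem_toFinset.mpr he₀)]
  simp [ρ', he₀]

lemma fRho_diff_singleton (S : Set (Sym2 V)) (ρ : {e : Sym2 V // e ∈ S} → F2)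
    {e₀ : Sym2 V} (he₀ : e₀ ∈ S) (v : V) :
    fRho (S \ {e₀}) (fun e => ρ ⟨e.1, e.2.1⟩) v
      = fRho S ρ v + if v ∈ e₀ then ρ ⟨e₀, he₀⟩ else 0 := by
  rw [fRho, fRho, vdeg_diff_singleton S ρ he₀, add_assoc, add_assoc, CharTwo.add_self_eq_zero,
    add_zero]

lemma sum_indicator_fRho_diff_singleton (G : SimpleGraph V) (S : Set (Sym2 V))
    (ρ : {e : Sym2 V // e ∈ S} → F2) {e₀ : Sym2 V} (he₀ : e₀ ∈ S) (he₀G : e₀ ∈ G.edgeSet)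
    (D : (G.deleteEdges (S \ {e₀})).ConnectedComponent) :
    ∑ v, D.supp.indicator (fRho (S \ {e₀}) (fun e => ρ ⟨e.1, e.2.1⟩)) v
      = ∑ C : (G.deleteEdges S).ConnectedComponent
          with C.map (SimpleGraph.Hom.ofLE (G.deleteEdges_anti Set.sdiff_subset)) = D,
        ∑ v, C.supp.indicator (fRho S ρ) v := by
  have he₀D : e₀ ∈ (G.deleteEdges (S \ {e₀})).edgeSet := by
    rw [SimpleGraph.edgeSet_deleteEdges]
    exact ⟨he₀G, fun h => h.2 rfl⟩
  have hsplit : fRho (S \ {e₀}) (fun e => ρ ⟨e.1, e.2.1⟩)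
      = fRho S ρ + fun v => if v ∈ e₀ then ρ ⟨e₀, he₀⟩ else 0 :=
    funext (fRho_diff_singleton S ρ he₀)
  simp only [hsplit, Set.indicator_add', Pi.add_apply, Finset.sum_add_distrib,
    D.sum_indicator_supp_ite_mem_eq_zero he₀D, add_zero]
  exact D.sum_indicator_supp_eq_sum_map_ofLE _ _

end PartialAssignment

/-- validity of partial assignments is preserved under unfixing an edge
(downward closure; Lemma `lem: first_two_cond_satisfied`). -/
theorem stmt15 {V : Type*} [Fintype V] (G : SimpleGraph V)
    (S : Set (Sym2 V)) (hS : S ⊆ G.edgeSet)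
    (ρ : {e : Sym2 V // e ∈ S} → F2)
    (hvalid : IsValid G S ρ)
    (e₀ : Sym2 V) (he₀ : e₀ ∈ S) :
    IsValid G (S \ {e₀}) (fun e => ρ ⟨e.1, e.2.1⟩) := by
  obtain ⟨⟨C₀, hC₀, huniq⟩, hbig⟩ := hvalid
  set φ := SimpleGraph.ConnectedComponent.map
    (SimpleGraph.Hom.ofLE (G.deleteEdges_anti (Set.sdiff_subset (s := S) (t := {e₀}))))
  have hold : ∀ C, ∑ v, C.supp.indicator (fRho S ρ) v = if C = C₀ then 1 else 0 := by
    intro C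
    split_ifs with h
    · rwa [h]
    · have : ∀ x : F2, x ≠ 1 → x = 0 := by decide
      exact this _ (mt (huniq C) h)
  have hnew : ∀ D, ∑ v, D.supp.indicator (fRho (S \ {e₀}) (fun e => ρ ⟨e.1, e.2.1⟩)) v
      = if φ C₀ = D then 1 else 0 := by
    intro D
    simp_rw [sum_indicator_fRho_diff_singleton G S ρ he₀ (hS he₀), hold, Finset.sum_ite_eq']
    simp [φ]
  have hodd_unique : ∀ D, ∑ v, D.supp.indicator (fRho (S \ {e₀}) (fun e => ρ ⟨e.1, e.2.1⟩)) v = 1 →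
      D = φ C₀ := by
    intro D hD
    rw [hnew] at hD
    split_ifs at hD with h
    exacts [h.symm, absurd hD zero_ne_one]
  refine ⟨⟨φ C₀, (hnew _).trans (if_pos rfl), hodd_unique⟩, fun D hD => ?_⟩
  rw [hodd_unique D hD]
  calc Fintype.card V < 2 * C₀.supp.ncard := hbig C₀ hC₀
    _ ≤ 2 * (φ C₀).supp.ncard := by
      gcongr
      exacts [Set.toFinite _, C₀.supp_subset_supp_map_ofLE _]
end
end

section
/- Let G = (V,E) be a finite simple graph with |V| ≥ 2 and let (S, ρ) with S ⊆ E and ρ : S → 𝔽₂ be a valid partial assignment. If v ∈ V is a vertex all of whose incident edges lie in S, then Σ_{e ∈ S, v ∈ e} ρ(e) = 1 in 𝔽₂; that is, a valid partial assignment cannot falsify the parity constraint of any vertex whose edges it fully fixes. -/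
open Finset
open scoped Classical

noncomputable section

/-- a valid partial assignment never falsifies the parity constraint of a
vertex all of whose incident edges it fixes (no falsification; Lemma
`lem: first_two_cond_satisfied`). -/
theorem stmt16 {V : Type*} [Fintype V] (hV : 2 ≤ Fintype.card V)
    (G : SimpleGraph V)
    (S : Set (Sym2 V)) (hS : S ⊆ G.edgeSet)
    (ρ : {e : Sym2 V // e ∈ S} → F2)
    (hvalid : IsValid G S ρ)
    (v : V) (hv : ∀ e ∈ G.edgeSet, v ∈ e → e ∈ S) :
    vdeg S ρ v = 1 := by
  set G' := G.deleteEdges S with hG'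
  -- v is isolated in G'
  have hiso : ∀ w, ¬ G'.Adj v w := by
    intro w hw
    rcases hw with ⟨hadj, hnS⟩
    exact hnS ((SimpleGraph.fromEdgeSet_adj _).mpr
      ⟨hv _ hadj (Sym2.mem_mk_left v w), hadj.ne⟩)
  -- component of v has support {v}
  have hsupp : (G'.connectedComponentMk v).supp = {v} := by
    ext w
    simp only [SimpleGraph.ConnectedComponent.mem_supp_iff, Set.mem_singleton_iff,
      SimpleGraph.ConnectedComponent.eq]
    constructor
    · intro h
      obtain ⟨p⟩ := h.symm
      cases p with
      | nil => rfl
      | cons h _ => exact absurd h (hiso _)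
    · rintro rfl; exact SimpleGraph.Reachable.refl _
  by_contra hne
  have h0 : vdeg S ρ v = 0 := by
    have : ∀ x : F2, x = 0 ∨ x = 1 := by decide
    rcases this (vdeg S ρ v) with h | h
    · exact h
    · exact absurd h hne
  have hf : fRho S ρ v = 1 := by simp [fRho, h0]
  have hsum : (∑ u : V, (G'.connectedComponentMk v).supp.indicator (fRho S ρ) u) = 1 := by
    rw [hsupp]
    rw [Finset.sum_eq_single v]
    · simp [Set.indicator_of_mem, hf]
    · intro u _ hu
      exact Set.indicator_of_notMem (by simpa using hu) _
    · simp
  have := hvalid.2 _ hsum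
  rw [hsupp] at this
  simp [Set.ncard_singleton] at this
  omega
end
end

section
/- Let n, b be positive integers, let A ⊆ 𝔽₂^{[n]×[b]} be a nonempty affine subspace, let T ⊆ [n] be a deviolator for A, and let y ∈ 𝔽₂^{T×[b]} satisfy A ∩ C_y ≠ ∅. Then A_y = {x̃ ∈ 𝔽₂^{([n]∖T)×[b]} : the point of 𝔽₂^{[n]×[b]} equal to y on the blocks of T and to x̃ elsewhere lies in A} is a nonempty safe affine subspace of 𝔽₂^{([n]∖T)×[b]}. -/
open Finset

noncomputable section

section Aux

variable {n b : ℕ}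

/-- Linear embedding of the out-of-`T` space into the full space (by zero on `T`). -/
def embL (T : Finset (Fin n)) :
    (({i : Fin n // i ∉ T} × Fin b) → F2) →ₗ[F2] ((Fin n × Fin b) → F2) where
  toFun x p := if h : p.1 ∈ T then 0 else x (⟨p.1, h⟩, p.2)
  map_add' x y := by funext p; by_cases h : p.1 ∈ T <;> simp [h]
  map_smul' c x := by funext p; by_cases h : p.1 ∈ T <;> simp [h]

/-- `restrictOut` as a linear map. -/
def resL (T : Finset (Fin n)) :
    ((Fin n × Fin b) → F2) →ₗ[F2] (({i : Fin n // i ∉ T} × Fin b) → F2) where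
  toFun := restrictOut T
  map_add' _ _ := rfl
  map_smul' _ _ := rfl

/-- Restriction to the blocks of `T`, as a linear map. -/
def resT (T : Finset (Fin n)) :
    ((Fin n × Fin b) → F2) →ₗ[F2] (({i : Fin n // i ∈ T} × Fin b) → F2) where
  toFun v q := v (q.1.1, q.2)
  map_add' _ _ := rfl
  map_smul' _ _ := rfl

/-- Dot product with a fixed vector, as a linear map. -/
def dotL {S : Type*} [Fintype S] (l : S → F2) : (S → F2) →ₗ[F2] F2 where
  toFun x := ∑ q, l q * x q
  map_add' x y := by simp [mul_add, Finset.sum_add_distrib]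
  map_smul' c x := by simp [Finset.mul_sum, mul_left_comm]

lemma dotL_repr {S : Type*} [Fintype S] [DecidableEq S] (ψ : (S → F2) →ₗ[F2] F2)
    (x : S → F2) : ψ x = ∑ q, ψ (fun r => if q = r then 1 else 0) * x q := by
  conv_lhs => rw [pi_eq_sum_univ x, map_sum]
  refine Finset.sum_congr rfl fun q _ => ?_
  rw [map_smul, smul_eq_mul, mul_comm]

/-- `glue T y` as an affine map. -/
def glueA (T : Finset (Fin n)) (y : ({i : Fin n // i ∈ T} × Fin b) → F2) :
    (({i : Fin n // i ∉ T} × Fin b) → F2) →ᵃ[F2] ((Fin n × Fin b) → F2) where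
  toFun := glue T y
  linear := embL T
  map_vadd' p v := by
    funext q
    by_cases h : q.1 ∈ T <;> simp [glue, embL, h]

end Aux

/-- restricting an affine subspace by an extendable assignment to the
blocks of a deviolator yields a nonempty safe affine subspace
(Lemma `lem: removing closure makes affine space nice`). -/
theorem stmt17 {n b : ℕ} (hn : 0 < n) (hb : 0 < b)
    (A : AffineSubspace F2 ((Fin n × Fin b) → F2))
    (hAne : (A : Set ((Fin n × Fin b) → F2)).Nonempty)
    (T : Finset (Fin n)) (hT : IsDeviolator A T)
    (y : ({i : Fin n // i ∈ T} × Fin b) → F2)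
    (hy : ((A : Set ((Fin n × Fin b) → F2)) ∩ cube T y).Nonempty) :
    ∃ A' : AffineSubspace F2 (({i : Fin n // i ∉ T} × Fin b) → F2),
      (A' : Set (({i : Fin n // i ∉ T} × Fin b) → F2))
          = {x | glue T y x ∈ A} ∧
      (A' : Set (({i : Fin n // i ∉ T} × Fin b) → F2)).Nonempty ∧
      IsSafeAffine A' := by
  classical
  set A' : AffineSubspace F2 (({i : Fin n // i ∉ T} × Fin b) → F2) := A.comap (glueA T y)
    with hA'
  obtain ⟨a, haA, hay⟩ := hy
  set x₀ : ({i : Fin n // i ∉ T} × Fin b) → F2 := restrictOut T a with hx₀def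
  have hglue : glue T y x₀ = a := by
    funext p
    by_cases h : p.1 ∈ T
    · simp only [glue, dif_pos h]
      exact (hay p.1 h p.2).symm
    · simp only [glue, dif_neg h, hx₀def, restrictOut]
  have hx₀ : x₀ ∈ A' := by
    rw [hA', AffineSubspace.mem_comap]
    show glue T y x₀ ∈ A
    rw [hglue]; exact haA
  have hdir : ∀ v, embL T v ∈ A.direction → v ∈ A'.direction := by
    intro v hv
    have h2 : v + x₀ ∈ A' := by
      rw [hA', AffineSubspace.mem_comap]
      have hmv : (glueA T y) (v +ᵥ x₀) = embL T v +ᵥ (glueA T y) x₀ := (glueA T y).map_vadd x₀ v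
      show glue T y (v + x₀) ∈ A
      have : glue T y (v + x₀) = embL T v + glue T y x₀ := hmv
      rw [this, hglue]
      exact AffineSubspace.vadd_mem_of_mem_direction hv haA
    have := AffineSubspace.vsub_mem_direction h2 hx₀
    simpa using this
  refine ⟨A', ?_, ⟨x₀, hx₀⟩, ?_⟩
  · rw [hA', AffineSubspace.coe_comap]
    rfl
  · -- safety
    have hsub : annih A' ⊆ restrictOut T '' annih A := by
      intro l' hl'
      -- set up the factoring
      set f : A.direction →ₗ[F2] (({i : Fin n // i ∈ T} × Fin b) → F2) :=
        (resT T).comp A.direction.subtype with hf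
      set Φ : A.direction →ₗ[F2] F2 :=
        (dotL l').comp ((resL T).comp A.direction.subtype) with hΦ
      have hker : LinearMap.ker f ≤ LinearMap.ker Φ := by
        rintro ⟨w, hw⟩ hwk
        have hwk' : f ⟨w, hw⟩ = 0 := hwk
        have hz : ∀ (i : Fin n) (h : i ∈ T) (j : Fin b), w (i, j) = 0 := by
          intro i h j
          exact congrFun hwk' (⟨i, h⟩, j)
        have hemb : embL T (restrictOut T w) = w := by
          funext p
          by_cases h : p.1 ∈ T
          · simp only [embL, LinearMap.coe_mk, AddHom.coe_mk, dif_pos h]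
            exact (hz p.1 h p.2).symm
          · simp only [embL, LinearMap.coe_mk, AddHom.coe_mk, dif_neg h]
            rfl
        have hmem : restrictOut T w ∈ A'.direction := hdir _ (by rw [hemb]; exact hw)
        show Φ ⟨w, hw⟩ = 0
        exact hl' _ hmem
      set Φq := (LinearMap.ker f).liftQ Φ hker with hΦq
      set e := f.quotKerEquivRange with he
      obtain ⟨ψ, hψ⟩ := LinearMap.exists_extend (Φq.comp e.symm.toLinearMap)
      have hψf : ∀ w : A.direction, ψ (f w) = Φ w := by
        intro w
        have h1 : e.symm ⟨f w, LinearMap.mem_range_self f w⟩ =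
            Submodule.Quotient.mk w := by
          rw [LinearEquiv.symm_apply_eq]
          exact Subtype.ext (by simp [he])
        calc ψ (f w) = (ψ.comp (LinearMap.range f).subtype)
              ⟨f w, LinearMap.mem_range_self f w⟩ := rfl
          _ = (Φq.comp e.symm.toLinearMap) ⟨f w, LinearMap.mem_range_self f w⟩ := by
              rw [hψ]
          _ = Φq (e.symm ⟨f w, LinearMap.mem_range_self f w⟩) := rfl
          _ = Φq (Submodule.Quotient.mk w) := by rw [h1]
          _ = Φ w := Submodule.liftQ_apply _ _ _
      set m : ({i : Fin n // i ∈ T} × Fin b) → F2 :=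
        fun q => ψ (fun r => if q = r then 1 else 0) with hm
      set l : (Fin n × Fin b) → F2 :=
        fun p => if h : p.1 ∈ T then m (⟨p.1, h⟩, p.2) else l' (⟨p.1, h⟩, p.2) with hl
      have hself : ∀ a : F2, a + a = 0 := by decide
      refine ⟨l, ?_, ?_⟩
      · -- l ∈ annih A
        intro w hw
        have hT' : ∑ i ∈ T, ∑ j, l (i, j) * w (i, j) = ψ (f ⟨w, hw⟩) := by
          rw [dotL_repr ψ, Fintype.sum_prod_type,
            Finset.sum_subtype T (fun x => Iff.rfl) (fun i => ∑ j, l (i, j) * w (i, j))]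
          refine Finset.sum_congr rfl fun i _ => Finset.sum_congr rfl fun j _ => ?_
          simp only [hl, dif_pos i.2, hm, hf]
          rfl
        have hC' : ∑ i ∈ Tᶜ, ∑ j, l (i, j) * w (i, j) = Φ ⟨w, hw⟩ := by
          rw [show (Φ ⟨w, hw⟩ : F2) =
              ∑ q : {i : Fin n // i ∉ T} × Fin b, l' q * w (q.1.1, q.2) from rfl,
            Fintype.sum_prod_type,
            Finset.sum_subtype Tᶜ (fun x => Finset.mem_compl)
              (fun i => ∑ j, l (i, j) * w (i, j))]
          refine Finset.sum_congr rfl fun i _ => Finset.sum_congr rfl fun j _ => ?_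
          simp only [hl, dif_neg i.2]
        calc ∑ p : Fin n × Fin b, l p * w p
            = ∑ i : Fin n, ∑ j, l (i, j) * w (i, j) := Fintype.sum_prod_type _
          _ = (∑ i ∈ T, ∑ j, l (i, j) * w (i, j)) +
              ∑ i ∈ Tᶜ, ∑ j, l (i, j) * w (i, j) := (Finset.sum_add_sum_compl T _).symm
          _ = Φ ⟨w, hw⟩ + Φ ⟨w, hw⟩ := by rw [hT', hC', hψf]
          _ = 0 := hself _
      · funext q
        show l (q.1.1, q.2) = l' q
        simp only [hl, dif_neg q.1.2]
    intro k w hw hli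
    exact hT k w (fun m0 => Submodule.span_mono hsub (hw m0)) hli
end
end
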